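/- Under Assumption 2, let η ∈ [η_l, η_u], let ρ₁, ρ₂ ∈ [ρ_l, ρ_u] with ρ₁ ≤ ρ₂, and let (z_j) and (z'_j) be the CG iteration processes from the same initial point z₀ with parameters (ρ₁, η) and (ρ₂, η), respectively. Then for every integer j ≥ 2, ‖z_j − z'_j‖ ≤ (ρ₂ − ρ₁)·G(ρ₁, η, j). -/

import Mathlib

/-! The error `e n = ‖z n - z' n‖` obeys
`e (n + 2) ≤ (D + η) e (n + 1) + η e n + (ρ₂ - ρ₁) L Z (1 - β) ^ (n + 1)`:
by cocoercivity of `∇f` (Baillon–Haddad) the gradient step `x ↦ x - ρ ∇f x` is `D(ρ)`-Lipschitz,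
and `‖∇f (z' n)‖ ≤ L ‖z' n‖ ≤ L Z (1 - β) ^ n`. `G` is the closed-form solution of the same linear
recurrence with forcing `L Z (1 - β) ^ (n + 2)`, and a discrete comparison principle against `G`
minus a geometric correction bounds `e` by `(ρ₂ - ρ₁) G`. -/

open RealInnerProductSpace Set

section SmoothConvex

variable {E : Type*} [NormedAddCommGroup E] [InnerProductSpace ℝ E] [CompleteSpace E]
  {f : E → ℝ} {f' : E → E} {L : ℝ}

lemma hasDerivAt_comp_add_smul (hf : ∀ x, HasGradientAt f (f' x) x) (x v : E) (t : ℝ) :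
    HasDerivAt (fun s : ℝ => f (x + s • v)) ⟪f' (x + t • v), v⟫ t := by
  have hline : HasDerivAt (fun s : ℝ => x + s • v) v t := by
    simpa using ((hasDerivAt_id t).smul_const v).const_add x
  simpa [Function.comp_def] using (hf (x + t • v)).hasFDerivAt.comp_hasDerivAt t hline

lemma ConvexOn.inner_gradient_le_sub (hconv : ConvexOn ℝ univ f)
    (hf : ∀ x, HasGradientAt f (f' x) x) (x y : E) : ⟪f' x, y - x⟫ ≤ f y - f x := by
  have hline : ConvexOn ℝ univ (fun s : ℝ => f (x + s • (y - x))) := by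
    simpa [Function.comp_def, AffineMap.lineMap_apply, add_comm] using
      hconv.comp_affineMap (AffineMap.lineMap x y)
  simpa [slope_def_field] using hline.le_slope_of_hasDerivAt (mem_univ 0) (mem_univ 1)
    zero_lt_one (by simpa using hasDerivAt_comp_add_smul hf x (y - x) 0)

lemma apply_add_le_of_lipschitz_gradient (hf : ∀ x, HasGradientAt f (f' x) x)
    (hlip : ∀ x y, ‖f' x - f' y‖ ≤ L * ‖x - y‖) (x v : E) :
    f (x + v) ≤ f x + ⟪f' x, v⟫ + L / 2 * ‖v‖ ^ 2 := by
  set φ : ℝ → ℝ := fun t => f (x + t • v) - t * ⟪f' x, v⟫ - L / 2 * t ^ 2 * ‖v‖ ^ 2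
  have hφ : ∀ t, HasDerivAt φ (⟪f' (x + t • v), v⟫ - ⟪f' x, v⟫ - L * t * ‖v‖ ^ 2) t := by
    intro t
    have h := ((hasDerivAt_comp_add_smul hf x v t).sub ((hasDerivAt_id' t).mul_const ⟪f' x, v⟫)).sub
      (((hasDerivAt_pow 2 t).const_mul (L / 2)).mul_const (‖v‖ ^ 2))
    exact h.congr_deriv (by push_cast; ring)
  have hφ' : ∀ t ∈ interior (Icc (0 : ℝ) 1),
      ⟪f' (x + t • v), v⟫ - ⟪f' x, v⟫ - L * t * ‖v‖ ^ 2 ≤ 0 := by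
    intro t ht
    rw [interior_Icc] at ht
    calc ⟪f' (x + t • v), v⟫ - ⟪f' x, v⟫ - L * t * ‖v‖ ^ 2
        = ⟪f' (x + t • v) - f' x, v⟫ - L * t * ‖v‖ ^ 2 := by rw [inner_sub_left]
      _ ≤ L * ‖x + t • v - x‖ * ‖v‖ - L * t * ‖v‖ ^ 2 := by
        gcongr
        exact (real_inner_le_norm _ _).trans (mul_le_mul_of_nonneg_right (hlip _ _) (norm_nonneg v))
      _ = 0 := by
        rw [add_sub_cancel_left, norm_smul, Real.norm_of_nonneg ht.1.le]; ring
  have hanti := antitoneOn_of_hasDerivWithinAt_nonpos (convex_Icc 0 1)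
    (HasDerivAt.continuousOn fun t _ => hφ t) (fun t _ => (hφ t).hasDerivWithinAt) hφ'
  have h01 := hanti (left_mem_Icc.2 zero_le_one) (right_mem_Icc.2 zero_le_one) zero_le_one
  simp [φ] at h01
  linarith

lemma ConvexOn.add_inner_add_sq_norm_sub_le (hconv : ConvexOn ℝ univ f)
    (hf : ∀ x, HasGradientAt f (f' x) x) (hlip : ∀ x y, ‖f' x - f' y‖ ≤ L * ‖x - y‖) (hL : 0 < L)
    (x y : E) : f y + ⟪f' y, x - y⟫ + 1 / (2 * L) * ‖f' x - f' y‖ ^ 2 ≤ f x := by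
  set d := f' x - f' y
  have hdesc := apply_add_le_of_lipschitz_gradient hf hlip x (-(1 / L) • d)
  have hfirst := hconv.inner_gradient_le_sub hf y (x + -(1 / L) • d)
  have hd : 1 / L * ⟪f' x, d⟫ - 1 / L * ⟪f' y, d⟫ = 1 / L * ‖d‖ ^ 2 := by
    rw [← mul_sub, ← inner_sub_left, real_inner_self_eq_norm_sq]
  rw [add_sub_right_comm, inner_add_right, real_inner_smul_right] at hfirst
  rw [real_inner_smul_right, norm_smul, Real.norm_eq_abs, abs_neg,
    abs_of_pos (by positivity)] at hdesc
  have hsq : L / 2 * (1 / L * ‖d‖) ^ 2 = 1 / L * ‖d‖ ^ 2 - 1 / (2 * L) * ‖d‖ ^ 2 := by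
    field_simp; ring
  linarith

lemma ConvexOn.sq_norm_gradient_sub_le_inner (hconv : ConvexOn ℝ univ f)
    (hf : ∀ x, HasGradientAt f (f' x) x) (hlip : ∀ x y, ‖f' x - f' y‖ ≤ L * ‖x - y‖) (hL : 0 < L)
    (x y : E) : 1 / L * ‖f' x - f' y‖ ^ 2 ≤ ⟪f' x - f' y, x - y⟫ := by
  have hxy := hconv.add_inner_add_sq_norm_sub_le hf hlip hL x y
  have hyx := hconv.add_inner_add_sq_norm_sub_le hf hlip hL y x
  rw [norm_sub_rev] at hyx
  have hinner : ⟪f' x - f' y, x - y⟫ = -⟪f' x, y - x⟫ - ⟪f' y, x - y⟫ := by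
    rw [inner_sub_left, ← inner_neg_right, neg_sub]
  have hsq : 1 / L * ‖f' x - f' y‖ ^ 2 = 2 * (1 / (2 * L) * ‖f' x - f' y‖ ^ 2) := by
    field_simp
  linarith

lemma ConvexOn.norm_gradientStep_sub_le (hconv : ConvexOn ℝ univ f)
    (hf : ∀ x, HasGradientAt f (f' x) x) (hlip : ∀ x y, ‖f' x - f' y‖ ≤ L * ‖x - y‖) (hL : 0 < L)
    {ρ : ℝ} (hρ : 0 < ρ) (x y : E) :
    ‖(x - ρ • f' x) - (y - ρ • f' y)‖ ≤ max 1 (L * ρ - 1) * ‖x - y‖ := by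
  set d := x - y
  set g := f' x - f' y
  have hco := hconv.sq_norm_gradient_sub_le_inner hf hlip hL x y
  have hg : ‖g‖ ≤ L * ‖d‖ := hlip x y
  have hexpand : ‖(x - ρ • f' x) - (y - ρ • f' y)‖ ^ 2
      = ‖d‖ ^ 2 - 2 * ρ * ⟪g, d⟫ + ρ ^ 2 * ‖g‖ ^ 2 := by
    rw [show (x - ρ • f' x) - (y - ρ • f' y) = d - ρ • g by simp only [d, g, smul_sub]; abel,
      norm_sub_sq_real, real_inner_smul_right, norm_smul, Real.norm_of_nonneg hρ.le,
      real_inner_comm]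
    ring
  have hbound : ‖(x - ρ • f' x) - (y - ρ • f' y)‖ ^ 2 ≤ ‖d‖ ^ 2 + ρ * (ρ - 2 / L) * ‖g‖ ^ 2 := by
    rw [hexpand]
    have := mul_le_mul_of_nonneg_left hco (by positivity : (0 : ℝ) ≤ 2 * ρ)
    field_simp at this ⊢
    nlinarith
  have hD : 1 ≤ max 1 (L * ρ - 1) := le_max_left _ _
  refine (pow_le_pow_iff_left₀ (norm_nonneg _) (by positivity) two_ne_zero).1 (hbound.trans ?_)
  rcases le_total ρ (2 / L) with hρL | hρL
  · have hneg : ρ * (ρ - 2 / L) * ‖g‖ ^ 2 ≤ 0 := mul_nonpos_of_nonpos_of_nonneg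
      (mul_nonpos_of_nonneg_of_nonpos hρ.le (by linarith)) (sq_nonneg _)
    have hd : ‖d‖ ^ 2 ≤ (max 1 (L * ρ - 1) * ‖d‖) ^ 2 := by
      rw [mul_pow]; exact le_mul_of_one_le_left (sq_nonneg _) (one_le_pow₀ hD)
    linarith
  · have hLρ : L * ρ - 1 ≤ max 1 (L * ρ - 1) := le_max_right _ _
    have hsq : ‖g‖ ^ 2 ≤ (L * ‖d‖) ^ 2 := pow_le_pow_left₀ (norm_nonneg _) hg 2
    calc ‖d‖ ^ 2 + ρ * (ρ - 2 / L) * ‖g‖ ^ 2 ≤ ‖d‖ ^ 2 + ρ * (ρ - 2 / L) * (L * ‖d‖) ^ 2 := by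
          gcongr
      _ = ((L * ρ - 1) * ‖d‖) ^ 2 := by field_simp; ring
      _ ≤ (max 1 (L * ρ - 1) * ‖d‖) ^ 2 := by
          have : 0 ≤ L * ρ - 1 := by rw [div_le_iff₀ hL] at hρL; linarith
          gcongr

end SmoothConvex

lemma norm_cg_step_sub_le {F : Type*} [NormedAddCommGroup F] [NormedSpace ℝ F] {f' : F → F}
    {ρ ρ' η D : ℝ} (hstep : ∀ x y, ‖(x - ρ • f' x) - (y - ρ • f' y)‖ ≤ D * ‖x - y‖) (hη : 0 ≤ η)
    (x₀ x₁ y₀ y₁ : F) :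
    ‖(x₁ - ρ • f' x₁ - η • (x₁ - x₀)) - (y₁ - ρ' • f' y₁ - η • (y₁ - y₀))‖
      ≤ (D + η) * ‖x₁ - y₁‖ + η * ‖x₀ - y₀‖ + |ρ' - ρ| * ‖f' y₁‖ := by
  have hsplit : (x₁ - ρ • f' x₁ - η • (x₁ - x₀)) - (y₁ - ρ' • f' y₁ - η • (y₁ - y₀))
      = ((x₁ - ρ • f' x₁) - (y₁ - ρ • f' y₁)) - η • (x₁ - y₁) + η • (x₀ - y₀)
        + (ρ' - ρ) • f' y₁ := by
    module
  rw [hsplit]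
  calc _ ≤ ‖(x₁ - ρ • f' x₁) - (y₁ - ρ • f' y₁)‖ + ‖η • (x₁ - y₁)‖ + ‖η • (x₀ - y₀)‖
        + ‖(ρ' - ρ) • f' y₁‖ := by
        refine (norm_add_le _ _).trans (add_le_add_left ((norm_add_le _ _).trans
          (add_le_add_left (norm_sub_le _ _) _)) _)
    _ ≤ _ := by
      rw [norm_smul, norm_smul, norm_smul, Real.norm_of_nonneg hη, Real.norm_eq_abs]
      linarith [hstep x₁ y₁]

lemma le_of_two_step_recurrence {a b : ℝ} {c e H : ℕ → ℝ} (ha : 0 ≤ a) (hb : 0 ≤ b)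
    (he : ∀ n, e (n + 2) ≤ a * e (n + 1) + b * e n + c n)
    (hH : ∀ n, a * H (n + 1) + b * H n + c n ≤ H (n + 2))
    (h0 : e 0 ≤ H 0) (h1 : e 1 ≤ H 1) : ∀ n, e n ≤ H n := by
  refine Nat.twoStepInduction h0 h1 fun n ihn ihn1 => ?_
  calc e (n + 2) ≤ a * e (n + 1) + b * e n + c n := he n
    _ ≤ a * H (n + 1) + b * H n + c n := by gcongr
    _ ≤ H (n + 2) := hH n

lemma le_mul_of_recurrence_geometric_forcing {D η β c δ : ℝ} {e G : ℕ → ℝ} (hD : 1 ≤ D)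
    (hη : 0 ≤ η) (hβ : β ∈ Ioo (0 : ℝ) 1) (hc : 0 ≤ c) (hδ : 0 ≤ δ)
    (he : ∀ n, e (n + 2) ≤ (D + η) * e (n + 1) + η * e n + δ * (c * (1 - β) ^ (n + 1)))
    (he0 : e 0 ≤ 0) (he1 : e 1 ≤ δ * c)
    (hG : ∀ n, G (n + 2) = (D + η) * G (n + 1) + η * G n + c * (1 - β) ^ (n + 2))
    (hG0 : G 0 = 0) (hG1 : G 1 = D * c / β) (n : ℕ) : e n ≤ δ * G n := by
  obtain ⟨hβ0, hβ1⟩ := hβ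
  -- the forcing of `e` lags one power of `1 - β` behind that of `G`; subtracting `s` absorbs the
  -- lag, and `s 0 = 0` keeps the comparison at `n = 0`
  set s : ℕ → ℝ := fun n => if n = 0 then 0 else c / β * (1 - β) ^ n
  have hs : ∀ n, 0 ≤ s n := fun n => by
    simp only [s]; split_ifs
    · rfl
    · exact mul_nonneg (div_nonneg hc hβ0.le) (pow_nonneg (by linarith) n)
  have hsuper : ∀ n, (D + η) * (δ * (G (n + 1) - s (n + 1))) + η * (δ * (G n - s n))
      + δ * (c * (1 - β) ^ (n + 1)) ≤ δ * (G (n + 2) - s (n + 2)) := by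
    intro n
    have hX : 0 ≤ c / β * (1 - β) ^ (n + 1) := hs (n + 1)
    have hcX : c * (1 - β) ^ (n + 1) = β * (c / β * (1 - β) ^ (n + 1)) := by field_simp
    have hcoef : 0 ≤ D + η - 1 + β * (1 - β) := by nlinarith
    have hkey : (D + η) * (G (n + 1) - s (n + 1)) + η * (G n - s n) + c * (1 - β) ^ (n + 1)
        ≤ G (n + 2) - s (n + 2) := by
      simp only [s, hG, Nat.add_eq_zero_iff, one_ne_zero, OfNat.ofNat_ne_zero, and_false,
        if_false, pow_succ _ (n + 1), hcX]
      nlinarith [mul_nonneg hcoef hX, mul_nonneg hη (hs n)]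
    linarith [mul_le_mul_of_nonneg_left hkey hδ]
  have hle := le_of_two_step_recurrence (H := fun n => δ * (G n - s n)) (by linarith) hη he hsuper
    (by simpa [s, hG0] using he0) ?_ n
  · exact hle.trans (mul_le_mul_of_nonneg_left (by linarith [hs n]) hδ)
  · have hbase : c ≤ D * c / β - c / β * (1 - β) := by
      have hdiff : D * c / β - c / β * (1 - β) - c = (D - 1) * c / β := by field_simp; ring
      rw [← sub_nonneg, hdiff]
      exact div_nonneg (mul_nonneg (by linarith) hc) hβ0.le
    simpa [s, hG1] using he1.trans (mul_le_mul_of_nonneg_left hbase hδ)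

lemma recurrence_of_closed_form {a b c q Δ A B r₁ r₂ : ℝ} {G : ℕ → ℝ}
    (hr₁ : r₁ ^ 2 - a * r₁ - b = 0) (hr₂ : r₂ ^ 2 - a * r₂ - b = 0)
    (hΔ : Δ = a * q + b - q ^ 2) (hΔ0 : Δ ≠ 0)
    (hG : ∀ j, G j = A * r₁ ^ j + B * r₂ ^ j - c * q ^ (j + 2) / Δ) (n : ℕ) :
    G (n + 2) = a * G (n + 1) + b * G n + c * q ^ (n + 2) := by
  rw [hG, hG, hG]
  linear_combination A * r₁ ^ n * hr₁ + B * r₂ ^ n * hr₂ - c * q ^ (n + 2) / Δ * hΔ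
    + c * q ^ (n + 2) * mul_inv_cancel₀ hΔ0

theorem cg_iteration_error_fix_eta_general
    {E : Type*} [NormedAddCommGroup E] [InnerProductSpace ℝ E] [CompleteSpace E]
    (f : E → ℝ) (f' : E → E) (L : ℝ) (hL : 0 < L)
    (hconv : ConvexOn ℝ Set.univ f)
    (hdiff : ∀ x : E, HasGradientAt f (f' x) x)
    (hlip : ∀ z₁ z₂ : E, ‖f' z₁ - f' z₂‖ ≤ L * ‖z₁ - z₂‖)
    -- Assumption 2
    (ρl ρu ηl ηu : ℝ) (hρl : 0 < ρl) (hηl : 0 < ηl)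
    (β : ℝ) (hβ : β ∈ Set.Ioo (0 : ℝ) 1)
    (Z : ℝ)
    (hgrad0 : f' 0 = 0)
    (z₀ : E) (hz₀Z : ‖z₀‖ ≤ Z)
    -- parameters
    (η : ℝ) (hη : η ∈ Set.Icc ηl ηu)
    (ρ₁ ρ₂ : ℝ) (hρ₁ : ρ₁ ∈ Set.Icc ρl ρu) (hρ : ρ₁ ≤ ρ₂)
    -- the two CG iteration processes from z₀
    (z z' : ℕ → E)
    (hz0 : z 0 = z₀) (hz'0 : z' 0 = z₀)
    (hz1 : z 1 = z₀ - ρ₁ • f' z₀) (hz'1 : z' 1 = z₀ - ρ₂ • f' z₀)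
    (hzrec : ∀ n : ℕ, z (n + 2) = z (n + 1) - ρ₁ • f' (z (n + 1)) - η • (z (n + 1) - z n))
    (hz'rec : ∀ n : ℕ, z' (n + 2) = z' (n + 1) - ρ₂ • f' (z' (n + 1)) - η • (z' (n + 1) - z' n))
    (hcz' : ∀ n : ℕ, ‖z' (n + 1)‖ ≤ (1 - β) * ‖z' n‖)
    -- the roots of the characteristic equation and the constants of G
    (r₁ r₂ : ℝ) (hr : r₂ < r₁)
    (hr₁ : r₁ ^ 2 - (max 1 (L * ρ₁ - 1) + η) * r₁ - η = 0)
    (hr₂ : r₂ ^ 2 - (max 1 (L * ρ₁ - 1) + η) * r₂ - η = 0)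
    (Δ R₀ R₁ : ℝ)
    (hΔ : Δ = (max 1 (L * ρ₁ - 1) + η) * (1 - β) + η - (1 - β) ^ 2)
    (hR₀ : R₀ = L * Z * (1 - β) ^ 2 / Δ)
    (hR₁ : R₁ = max 1 (L * ρ₁ - 1) * L * Z / β + L * Z * (1 - β) ^ 3 / Δ)
    (G : ℕ → ℝ)
    (hG : ∀ j : ℕ, G j = ((R₀ * r₂ - R₁) / (r₂ - r₁)) * r₁ ^ j +
      ((R₀ * r₁ - R₁) / (r₁ - r₂)) * r₂ ^ j - L * Z * (1 - β) ^ (j + 2) / Δ) :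
    ∀ j : ℕ, 2 ≤ j → ‖z j - z' j‖ ≤ (ρ₂ - ρ₁) * G j := by
  intro j _
  have hD : 1 ≤ max 1 (L * ρ₁ - 1) := le_max_left _ _
  have hη0 : 0 ≤ η := (hηl.trans_le hη.1).le
  have hZ : 0 ≤ Z := (norm_nonneg _).trans hz₀Z
  have hΔ0 : Δ ≠ 0 := by
    rw [hΔ]; nlinarith [hβ.1, hβ.2]
  have hr₁₂ : r₁ - r₂ ≠ 0 := sub_ne_zero.2 hr.ne'
  have hr₂₁ : r₂ - r₁ ≠ 0 := sub_ne_zero.2 hr.ne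
  have hgrad : ∀ w, ‖f' w‖ ≤ L * ‖w‖ := fun w => by simpa [hgrad0] using hlip w 0
  have hdecay : ∀ n, ‖z' n‖ ≤ (1 - β) ^ n * Z := by
    intro n
    induction n with
    | zero => simpa [hz'0] using hz₀Z
    | succ n ih =>
      rw [pow_succ', mul_assoc]
      exact (hcz' n).trans (mul_le_mul_of_nonneg_left ih (sub_nonneg.2 hβ.2.le))
  refine le_mul_of_recurrence_geometric_forcing (e := fun n => ‖z n - z' n‖) hD hη0 hβ
    (mul_nonneg hL.le hZ) (sub_nonneg.2 hρ) (fun n => ?_) (by simp [hz0, hz'0]) ?_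
    (recurrence_of_closed_form hr₁ hr₂ hΔ hΔ0 hG) ?_ ?_ j
  · rw [hzrec, hz'rec, ← abs_of_nonneg (sub_nonneg.2 hρ)]
    refine (norm_cg_step_sub_le (hconv.norm_gradientStep_sub_le hdiff hlip hL
      (hρl.trans_le hρ₁.1)) hη0 _ _ _ _).trans ?_
    gcongr
    exact (hgrad _).trans (by nlinarith [hdecay (n + 1)])
  · rw [hz1, hz'1, sub_sub_sub_cancel_left, ← sub_smul, norm_smul,
      Real.norm_of_nonneg (sub_nonneg.2 hρ)]
    gcongr
    exact (hgrad z₀).trans (by gcongr)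
  · rw [hG, hR₀]; field_simp; ring
  · rw [hG, hR₀, hR₁]; field_simp; ring

/-- Iteration error estimation fixing the conjugate parameter `η` (Lemma 4):
for CG processes `z` (with step size `ρ₁`) and `z'` (with step size `ρ₂`) started
from the same point `z₀`, `‖z_j - z'_j‖ ≤ (ρ₂ - ρ₁) · G(ρ₁, η, j)` for all `j ≥ 2`. -/
theorem cg_iteration_error_fix_eta
    {E : Type*} [NormedAddCommGroup E] [InnerProductSpace ℝ E] [CompleteSpace E]
    (f : E → ℝ) (f' : E → E) (L : ℝ) (hL : 0 < L)
    (hconv : ConvexOn ℝ Set.univ f)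
    (hdiff : ∀ x : E, HasGradientAt f (f' x) x)
    (hlip : ∀ z₁ z₂ : E, ‖f' z₁ - f' z₂‖ ≤ L * ‖z₁ - z₂‖)
    -- Assumption 2
    (ρl ρu ηl ηu : ℝ) (hρl : 0 < ρl) (hρlu : ρl ≤ ρu) (hηl : 0 < ηl) (hηlu : ηl ≤ ηu)
    (β : ℝ) (hβ : β ∈ Set.Ioo (0 : ℝ) 1)
    (ν Z : ℝ) (hν : 0 < ν) (hνLZ : ν < L * Z)
    (hgrad0 : f' 0 = 0)
    (z₀ : E) (hz₀ν : ν < ‖z₀‖) (hz₀Z : ‖z₀‖ ≤ Z)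
    -- parameters
    (η : ℝ) (hη : η ∈ Set.Icc ηl ηu)
    (ρ₁ ρ₂ : ℝ) (hρ₁ : ρ₁ ∈ Set.Icc ρl ρu) (hρ₂ : ρ₂ ∈ Set.Icc ρl ρu) (hρ : ρ₁ ≤ ρ₂)
    -- the two CG iteration processes from z₀
    (z z' : ℕ → E)
    (hz0 : z 0 = z₀) (hz'0 : z' 0 = z₀)
    (hz1 : z 1 = z₀ - ρ₁ • f' z₀) (hz'1 : z' 1 = z₀ - ρ₂ • f' z₀)
    (hzrec : ∀ n : ℕ, z (n + 2) = z (n + 1) - ρ₁ • f' (z (n + 1)) - η • (z (n + 1) - z n))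
    (hz'rec : ∀ n : ℕ, z' (n + 2) = z' (n + 1) - ρ₂ • f' (z' (n + 1)) - η • (z' (n + 1) - z' n))
    (hcz : ∀ n : ℕ, ‖z (n + 1)‖ ≤ (1 - β) * ‖z n‖)
    (hcz' : ∀ n : ℕ, ‖z' (n + 1)‖ ≤ (1 - β) * ‖z' n‖)
    -- the roots of the characteristic equation and the constants of G
    (r₁ r₂ : ℝ) (hr : r₂ < r₁)
    (hr₁ : r₁ ^ 2 - (max 1 (L * ρ₁ - 1) + η) * r₁ - η = 0)
    (hr₂ : r₂ ^ 2 - (max 1 (L * ρ₁ - 1) + η) * r₂ - η = 0)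
    (Δ R₀ R₁ : ℝ)
    (hΔ : Δ = (max 1 (L * ρ₁ - 1) + η) * (1 - β) + η - (1 - β) ^ 2)
    (hR₀ : R₀ = L * Z * (1 - β) ^ 2 / Δ)
    (hR₁ : R₁ = max 1 (L * ρ₁ - 1) * L * Z / β + L * Z * (1 - β) ^ 3 / Δ)
    (G : ℕ → ℝ)
    (hG : ∀ j : ℕ, G j = ((R₀ * r₂ - R₁) / (r₂ - r₁)) * r₁ ^ j +
      ((R₀ * r₁ - R₁) / (r₁ - r₂)) * r₂ ^ j - L * Z * (1 - β) ^ (j + 2) / Δ) :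
    ∀ j : ℕ, 2 ≤ j → ‖z j - z' j‖ ≤ (ρ₂ - ρ₁) * G j :=
  cg_iteration_error_fix_eta_general f f' L hL hconv hdiff hlip ρl ρu ηl ηu hρl hηl β hβ Z hgrad0 z₀
    hz₀Z η hη ρ₁ ρ₂ hρ₁ hρ z z' hz0 hz'0 hz1 hz'1 hzrec hz'rec hcz' r₁ r₂ hr hr₁ hr₂ Δ R₀ R₁ hΔ hR₀
    hR₁ G hG
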